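/- For every S-CORE term P, the denotation ⟦P⟧ : Σ → Σ induced by the R-semantics (⟦P⟧ σ = τ iff ⟨P, σ⟩ ⇓ τ) is a well-defined bijection on the set Σ of states. -/

import Mathlib

def push : ℤ × List ℤ × ℕ → ℤ × List ℤ × ℕ
  | (v, t, 0) => (0, v::t, 0)
  | (0, v::t, c+1) => (0, v::t, c+1)
  | (u, s, c+1) => (u, s, c)

def pop : ℤ × List ℤ × ℕ → ℤ × List ℤ × ℕ
  | (0, v::t, 0) => (v, t, 0)
  | (0, v::t, c+1) => (0, v::t, c+1)
  | (u, s, c) => (u, s, c+1)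

inductive Term where
  | skip : Term
  | inc : String → Term
  | dec : String → Term
  | push : String → Term
  | pop : String → Term
  | seq : Term → Term → Term
  | forLoop : String → Term → Term

def inv : Term → Term
  | .skip => .skip
  | .inc x => .dec x
  | .dec x => .inc x
  | .push x => .pop x
  | .pop x => .push x
  | .seq p q => .seq (inv q) (inv p)
  | .forLoop x p => .forLoop x (inv p)

def occurs (x : String) : Term → Prop
  | .skip => False
  | .inc y => x = y
  | .dec y => x = y
  | .push y => x = y
  | .pop y => x = y
  | .seq p q => occurs x p ∨ occurs x q
  | .forLoop y p => x = y ∨ occurs x p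

/-- Well-formed terms: the leading variable of a `FOR` never occurs in its body. -/
def WF : Term → Prop
  | .seq p q => WF p ∧ WF q
  | .forLoop x p => ¬ occurs x p ∧ WF p
  | _ => True

abbrev State := String → ℤ × List ℤ × ℕ

def upd (σ : State) (x : String) (p : ℤ × List ℤ × ℕ) : State :=
  fun y => if y = x then p else σ y

mutual
/-- The big-step R-semantics of S-CORE. -/
inductive Bigstep : Term → State → State → Prop where
  | skip (σ) : Bigstep .skip σ σ
  | inc (x σ) : Bigstep (.inc x) σ (upd σ x ((σ x).1 + 1, (σ x).2.1, (σ x).2.2))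
  | dec (x σ) : Bigstep (.dec x) σ (upd σ x ((σ x).1 - 1, (σ x).2.1, (σ x).2.2))
  | push (x σ) : Bigstep (.push x) σ (upd σ x (_root_.push (σ x)))
  | pop (x σ) : Bigstep (.pop x) σ (upd σ x (_root_.pop (σ x)))
  | seq {p q σ ν τ} : Bigstep p σ ν → Bigstep q ν τ → Bigstep (.seq p q) σ τ
  | forFwd {x p σ τ} : (σ x).1 ≥ 0 → Iter p (σ x).1.toNat σ τ →
      Bigstep (.forLoop x p) σ τ
  | forBwd {x p σ τ} : (σ x).1 < 0 → Iter (inv p) (-(σ x).1).toNat σ τ →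
      Bigstep (.forLoop x p) σ τ

/-- `Iter p n σ τ`: `n`-fold iteration of `p` takes `σ` to `τ`. -/
inductive Iter : Term → ℕ → State → State → Prop where
  | base (p σ) : Iter p 0 σ σ
  | step {p n σ ν τ} : Bigstep p σ ν → Iter p n ν τ → Iter p (n+1) σ τ
end

lemma Term_inv_inv (p : Term) : inv (inv p) = p := by
  induction p <;> simp [inv, *]

lemma Term_occurs_inv (x : String) (p : Term) : occurs x (inv p) ↔ occurs x p := by
  induction p <;> simp [inv, occurs, *] <;> tauto

lemma Term_WF_inv (p : Term) : WF (inv p) ↔ WF p := by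
  induction p <;> simp [inv, WF, Term_occurs_inv, *] <;> tauto

lemma pop_push (s : ℤ × List ℤ × ℕ) : pop (push s) = s := by
  obtain ⟨u, l, c⟩ := s
  by_cases hu : u = 0 <;> rcases l with _ | ⟨v, t⟩ <;> rcases c with _ | c <;>
    subst_vars <;> simp_all [push, pop]

lemma push_pop (s : ℤ × List ℤ × ℕ) : push (pop s) = s := by
  obtain ⟨u, l, c⟩ := s
  by_cases hu : u = 0 <;> rcases l with _ | ⟨v, t⟩ <;> rcases c with _ | c <;>
    subst_vars <;> simp_all [push, pop]

lemma iter_snoc {q : Term} {n σ ν τ} (h : Iter q n σ ν) (h2 : Bigstep q ν τ) :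
    Iter q (n+1) σ τ := by
  induction n generalizing σ with
  | zero => cases h; exact Iter.step h2 (Iter.base _ _)
  | succ n ih =>
    cases h with
    | step hb hi => exact Iter.step hb (ih hi)

lemma iter_pres {q : Term}
    (hq : ∀ x σ τ, ¬ occurs x q → Bigstep q σ τ → τ x = σ x) :
    ∀ n σ τ x, ¬ occurs x q → Iter q n σ τ → τ x = σ x := by
  intro n
  induction n with
  | zero => intro σ τ x hx h; cases h; rfl
  | succ n ih =>
    intro σ τ x hx h
    cases h with
    | step hb hi => rw [ih _ _ _ hx hi, hq _ _ _ hx hb]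

lemma Term_pres (p : Term) :
    (∀ x σ τ, ¬ occurs x p → Bigstep p σ τ → τ x = σ x) ∧
    (∀ x σ τ, ¬ occurs x (inv p) → Bigstep (inv p) σ τ → τ x = σ x) := by
  induction p with
  | skip => constructor <;> (intro x σ τ _ h; cases h; rfl)
  | inc y =>
    refine ⟨?_, ?_⟩ <;>
      (intro x σ τ hx h; cases h; simp only [occurs, inv] at hx; simp [upd, hx])
  | dec y =>
    refine ⟨?_, ?_⟩ <;>
      (intro x σ τ hx h; cases h; simp only [occurs, inv] at hx; simp [upd, hx])
  | push y =>
    refine ⟨?_, ?_⟩ <;>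
      (intro x σ τ hx h; cases h; simp only [occurs, inv] at hx; simp [upd, hx])
  | pop y =>
    refine ⟨?_, ?_⟩ <;>
      (intro x σ τ hx h; cases h; simp only [occurs, inv] at hx; simp [upd, hx])
  | seq p q ihp ihq =>
    constructor
    · intro x σ τ hx h
      cases h with
      | seq h1 h2 =>
        rw [ihq.1 _ _ _ (fun h => hx (Or.inr h)) h2,
            ihp.1 _ _ _ (fun h => hx (Or.inl h)) h1]
    · intro x σ τ hx h
      cases h with
      | seq h1 h2 =>
        rw [ihp.2 _ _ _ (fun h => hx (Or.inr h)) h2,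
            ihq.2 _ _ _ (fun h => hx (Or.inl h)) h1]
  | forLoop y p ih =>
    constructor
    · intro x σ τ hx h
      have hxp : ¬ occurs x p := fun h => hx (Or.inr h)
      cases h with
      | forFwd hge hit => exact iter_pres ih.1 _ _ _ _ hxp hit
      | forBwd hlt hit =>
        exact iter_pres ih.2 _ _ _ _
          (fun h => hxp ((Term_occurs_inv x p).mp h)) hit
    · intro x σ τ hx h
      have hxp : ¬ occurs x (inv p) := fun h => hx (Or.inr h)
      cases h with
      | forFwd hge hit => exact iter_pres ih.2 _ _ _ _ hxp hit
      | forBwd hlt hit =>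
        rw [Term_inv_inv] at hit
        exact iter_pres ih.1 _ _ _ _
          (fun h => hxp ((Term_occurs_inv x p).mpr h)) hit

lemma iter_det {q : Term}
    (hq : ∀ σ τ τ', Bigstep q σ τ → Bigstep q σ τ' → τ = τ') :
    ∀ n σ τ τ', Iter q n σ τ → Iter q n σ τ' → τ = τ' := by
  intro n
  induction n with
  | zero => intro σ τ τ' h h'; cases h; cases h'; rfl
  | succ n ih =>
    intro σ τ τ' h h'
    cases h with
    | step hb hi =>
      cases h' with
      | step hb' hi' =>
        obtain rfl := hq _ _ _ hb hb'
        exact ih _ _ _ hi hi'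

lemma Term_det (p : Term) :
    (∀ σ τ τ', Bigstep p σ τ → Bigstep p σ τ' → τ = τ') ∧
    (∀ σ τ τ', Bigstep (inv p) σ τ → Bigstep (inv p) σ τ' → τ = τ') := by
  induction p with
  | skip => constructor <;> (intro σ τ τ' h h'; cases h; cases h'; rfl)
  | inc y => constructor <;> (intro σ τ τ' h h'; cases h; cases h'; rfl)
  | dec y => constructor <;> (intro σ τ τ' h h'; cases h; cases h'; rfl)
  | push y => constructor <;> (intro σ τ τ' h h'; cases h; cases h'; rfl)
  | pop y => constructor <;> (intro σ τ τ' h h'; cases h; cases h'; rfl)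
  | seq p q ihp ihq =>
    constructor
    · intro σ τ τ' h h'
      cases h with
      | seq h1 h2 =>
        cases h' with
        | seq h1' h2' =>
          obtain rfl := ihp.1 _ _ _ h1 h1'
          exact ihq.1 _ _ _ h2 h2'
    · intro σ τ τ' h h'
      cases h with
      | seq h1 h2 =>
        cases h' with
        | seq h1' h2' =>
          obtain rfl := ihq.2 _ _ _ h1 h1'
          exact ihp.2 _ _ _ h2 h2'
  | forLoop y p ih =>
    constructor
    · intro σ τ τ' h h'
      cases h with
      | forFwd hge hit =>
        cases h' with
        | forFwd hge' hit' => exact iter_det ih.1 _ _ _ _ hit hit'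
        | forBwd hlt' hit' => exact absurd hlt' (not_lt.mpr hge)
      | forBwd hlt hit =>
        cases h' with
        | forFwd hge' hit' => exact absurd hlt (not_lt.mpr hge')
        | forBwd hlt' hit' => exact iter_det ih.2 _ _ _ _ hit hit'
    · intro σ τ τ' h h'
      cases h with
      | forFwd hge hit =>
        cases h' with
        | forFwd hge' hit' => exact iter_det ih.2 _ _ _ _ hit hit'
        | forBwd hlt' hit' => exact absurd hlt' (not_lt.mpr hge)
      | forBwd hlt hit =>
        cases h' with
        | forFwd hge' hit' => exact absurd hlt (not_lt.mpr hge')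
        | forBwd hlt' hit' =>
          rw [Term_inv_inv] at hit hit'
          exact iter_det ih.1 _ _ _ _ hit hit'

lemma iter_total {q : Term} (hq : ∀ σ, ∃ τ, Bigstep q σ τ) :
    ∀ n σ, ∃ τ, Iter q n σ τ := by
  intro n
  induction n with
  | zero => intro σ; exact ⟨σ, Iter.base _ _⟩
  | succ n ih =>
    intro σ
    obtain ⟨ν, hb⟩ := hq σ
    obtain ⟨τ, hi⟩ := ih ν
    exact ⟨τ, Iter.step hb hi⟩

lemma Term_total (p : Term) :
    (∀ σ, ∃ τ, Bigstep p σ τ) ∧ (∀ σ, ∃ τ, Bigstep (inv p) σ τ) := by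
  induction p with
  | skip => exact ⟨fun σ => ⟨σ, .skip σ⟩, fun σ => ⟨σ, .skip σ⟩⟩
  | inc y => exact ⟨fun σ => ⟨_, .inc y σ⟩, fun σ => ⟨_, .dec y σ⟩⟩
  | dec y => exact ⟨fun σ => ⟨_, .dec y σ⟩, fun σ => ⟨_, .inc y σ⟩⟩
  | push y => exact ⟨fun σ => ⟨_, .push y σ⟩, fun σ => ⟨_, .pop y σ⟩⟩
  | pop y => exact ⟨fun σ => ⟨_, .pop y σ⟩, fun σ => ⟨_, .push y σ⟩⟩
  | seq p q ihp ihq =>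
    constructor
    · intro σ
      obtain ⟨ν, h1⟩ := ihp.1 σ
      obtain ⟨τ, h2⟩ := ihq.1 ν
      exact ⟨τ, .seq h1 h2⟩
    · intro σ
      obtain ⟨ν, h1⟩ := ihq.2 σ
      obtain ⟨τ, h2⟩ := ihp.2 ν
      exact ⟨τ, .seq h1 h2⟩
  | forLoop y p ih =>
    constructor
    · intro σ
      rcases le_or_gt 0 (σ y).1 with hge | hlt
      · obtain ⟨τ, hit⟩ := iter_total ih.1 (σ y).1.toNat σ
        exact ⟨τ, .forFwd hge hit⟩
      · obtain ⟨τ, hit⟩ := iter_total ih.2 (-(σ y).1).toNat σ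
        exact ⟨τ, .forBwd hlt hit⟩
    · intro σ
      rcases le_or_gt 0 (σ y).1 with hge | hlt
      · obtain ⟨τ, hit⟩ := iter_total ih.2 (σ y).1.toNat σ
        exact ⟨τ, .forFwd hge hit⟩
      · obtain ⟨τ, hit⟩ := iter_total ih.1 (-(σ y).1).toNat σ
        exact ⟨τ, .forBwd hlt (by rw [Term_inv_inv]; exact hit)⟩

lemma iter_rev {q : Term}
    (hq : ∀ σ τ, Bigstep q σ τ → Bigstep (inv q) τ σ) :
    ∀ n σ τ, Iter q n σ τ → Iter (inv q) n τ σ := by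
  intro n
  induction n with
  | zero => intro σ τ h; cases h; exact Iter.base _ _
  | succ n ih =>
    intro σ τ h
    cases h with
    | step hb hi => exact iter_snoc (ih _ _ hi) (hq _ _ hb)

lemma Term_rev (p : Term) (hp : WF p) :
    (∀ σ τ, Bigstep p σ τ → Bigstep (inv p) τ σ) ∧
    (∀ σ τ, Bigstep (inv p) σ τ → Bigstep p τ σ) := by
  induction p with
  | skip => exact ⟨fun σ τ h => by cases h; exact .skip σ,
      fun σ τ h => by cases h; exact .skip σ⟩
  | inc y =>
    constructor
    · intro σ τ h
      cases h
      have := Bigstep.dec y (upd σ y ((σ y).1 + 1, (σ y).2.1, (σ y).2.2))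
      convert this using 1
      rfl
      funext z
      by_cases hz : z = y <;> simp [upd, hz]
    · intro σ τ h
      cases h
      have := Bigstep.inc y (upd σ y ((σ y).1 - 1, (σ y).2.1, (σ y).2.2))
      convert this using 1
      funext z
      by_cases hz : z = y <;> simp [upd, hz]
  | dec y =>
    constructor
    · intro σ τ h
      cases h
      have := Bigstep.inc y (upd σ y ((σ y).1 - 1, (σ y).2.1, (σ y).2.2))
      convert this using 1
      rfl
      funext z
      by_cases hz : z = y <;> simp [upd, hz]
    · intro σ τ h
      cases h
      have := Bigstep.dec y (upd σ y ((σ y).1 + 1, (σ y).2.1, (σ y).2.2))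
      convert this using 1
      funext z
      by_cases hz : z = y <;> simp [upd, hz]
  | push y =>
    constructor
    · intro σ τ h
      cases h
      have := Bigstep.pop y (upd σ y (_root_.push (σ y)))
      convert this using 1
      rfl
      funext z
      by_cases hz : z = y <;> simp [upd, hz, pop_push]
    · intro σ τ h
      cases h
      have := Bigstep.push y (upd σ y (_root_.pop (σ y)))
      convert this using 1
      funext z
      by_cases hz : z = y <;> simp [upd, hz, push_pop]
  | pop y =>
    constructor
    · intro σ τ h
      cases h
      have := Bigstep.push y (upd σ y (_root_.pop (σ y)))
      convert this using 1
      rfl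
      funext z
      by_cases hz : z = y <;> simp [upd, hz, push_pop]
    · intro σ τ h
      cases h
      have := Bigstep.pop y (upd σ y (_root_.push (σ y)))
      convert this using 1
      funext z
      by_cases hz : z = y <;> simp [upd, hz, pop_push]
  | seq p q ihp ihq =>
    obtain ⟨hp1, hp2⟩ := hp
    constructor
    · intro σ τ h
      cases h with
      | seq h1 h2 => exact .seq ((ihq hp2).1 _ _ h2) ((ihp hp1).1 _ _ h1)
    · intro σ τ h
      cases h with
      | seq h1 h2 => exact .seq ((ihp hp1).2 _ _ h2) ((ihq hp2).2 _ _ h1)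
  | forLoop y p ih =>
    obtain ⟨hocc, hwf⟩ := hp
    have ihh := ih hwf
    constructor
    · intro σ τ h
      cases h with
      | forFwd hge hit =>
        have hyy : τ y = σ y := iter_pres (Term_pres p).1 _ _ _ _ hocc hit
        refine Bigstep.forFwd (x := y) (p := inv p) ?_ ?_
        · rw [hyy]; exact hge
        · rw [hyy]; exact iter_rev ihh.1 _ _ _ hit
      | forBwd hlt hit =>
        have hyy : τ y = σ y := iter_pres (Term_pres p).2 _ _ _ _
          (fun h => hocc ((Term_occurs_inv y p).mp h)) hit
        refine Bigstep.forBwd (x := y) (p := inv p) ?_ ?_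
        · rw [hyy]; exact hlt
        · rw [hyy, Term_inv_inv]
          have := iter_rev (q := inv p)
            (fun a b hb => by rw [Term_inv_inv]; exact ihh.2 a b hb) _ _ _ hit
          rwa [Term_inv_inv] at this
    · intro σ τ h
      cases h with
      | forFwd hge hit =>
        have hyy : τ y = σ y := iter_pres (Term_pres p).2 _ _ _ _
          (fun h => hocc ((Term_occurs_inv y p).mp h)) hit
        refine Bigstep.forFwd (x := y) (p := p) ?_ ?_
        · rw [hyy]; exact hge
        · rw [hyy]
          have := iter_rev (q := inv p)
            (fun a b hb => by rw [Term_inv_inv]; exact ihh.2 a b hb) _ _ _ hit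
          rwa [Term_inv_inv] at this
      | forBwd hlt hit =>
        rw [Term_inv_inv] at hit
        have hyy : τ y = σ y := iter_pres (Term_pres p).1 _ _ _ _ hocc hit
        refine Bigstep.forBwd (x := y) (p := p) ?_ ?_
        · rw [hyy]; exact hlt
        · rw [hyy]; exact iter_rev ihh.1 _ _ _ hit

theorem rsem_denotation_bijective (P : Term) (hP : WF P) :
    ∃ f : State → State,
      (∀ σ τ : State, Bigstep P σ τ ↔ f σ = τ) ∧ Function.Bijective f := by
  have hT := (Term_total P).1
  have hTi := (Term_total P).2
  classical
  set f : State → State := fun σ => Classical.choose (hT σ) with hfdef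
  have hf : ∀ σ, Bigstep P σ (f σ) := fun σ => Classical.choose_spec (hT σ)
  set g : State → State := fun σ => Classical.choose (hTi σ) with hgdef
  have hg : ∀ σ, Bigstep (inv P) σ (g σ) := fun σ => Classical.choose_spec (hTi σ)
  refine ⟨f, ?_, ?_⟩
  · intro σ τ
    exact ⟨fun h => (Term_det P).1 σ _ _ (hf σ) h, fun h => h ▸ hf σ⟩
  · refine Function.bijective_iff_has_inverse.mpr ⟨g, ?_, ?_⟩
    · intro σ
      have h1 : Bigstep (inv P) (f σ) σ := (Term_rev P hP).1 _ _ (hf σ)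
      exact (Term_det P).2 _ _ _ (hg (f σ)) h1
    · intro σ
      have h1 : Bigstep P (g σ) σ := (Term_rev P hP).2 _ _ (hg σ)
      exact (Term_det P).1 _ _ _ (hf (g σ)) h1
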